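/- arXiv:2003.03104 — 3 statements merged into one kernel-verified Lean document; each statement's English description precedes it below -/
import Mathlib

section
/- Let N ≥ 2, let h > 0 and P ≥ 0 be real numbers with h·P < 2, and let q, p : Fin N → ℝ satisfy q i > 0 and |p i| ≤ P for all i. Let L be the N × N real matrix whose only nonzero entries are: L₀₀ = 1, L_{N−1,N−1} = 1, and, for every interior index i (0 < i < N−1), L_{i,i−1} = 1 + h·(p i)/2, L_{i,i} = −2 − h²·(q i), L_{i,i+1} = 1 − h·(p i)/2. Then det L ≠ 0; in particular L is invertible. -/
/-!
The relaxation matrix is strictly diagonally dominant by rows, so it is nonsingular by the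
Levy–Desplanques theorem. The boundary rows are rows of the identity. In an interior row the
condition `h·P < 2` makes both off-diagonal entries `1 ± h·p/2` nonnegative, so their absolute
values add up to exactly `2`, while `q > 0` makes the diagonal entry `-2 - h²q` exceed `2` in
absolute value.
-/

open Finset

theorem Fin.sum_erase_eq_add_of_support_adjacent {M : Type*} [AddCommMonoid M] {N : ℕ}
    (f : Fin N → M) {k : Fin N} (hk0 : 0 < k.val) (hkN : k.val + 1 < N)
    (hf : ∀ j : Fin N, j.val + 1 ≠ k.val → j ≠ k → j.val ≠ k.val + 1 → f j = 0) :
    ∑ j ∈ univ.erase k, f j = f ⟨k.val - 1, by omega⟩ + f ⟨k.val + 1, hkN⟩ := by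
  refine sum_eq_add _ _ (by simp [Fin.ext_iff]) (fun j hj hjab => hf j ?_ ?_ ?_) ?_ ?_
  · simpa [Fin.ext_iff, eq_tsub_iff_add_eq_of_le (Nat.one_le_iff_ne_zero.2 hk0.ne')] using hjab.1
  · exact ne_of_mem_erase hj
  · simpa [Fin.ext_iff] using hjab.2
  · simp [Fin.ext_iff]; omega
  · simp [Fin.ext_iff]

theorem abs_one_add_add_abs_one_sub_lt_abs_neg_two_sub {x c : ℝ} (hx : |x| ≤ 1) (hc : 0 < c) :
    |1 + x| + |1 - x| < |-2 - c| := by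
  obtain ⟨hx₁, hx₂⟩ := abs_le.mp hx
  rw [abs_of_nonneg (by linarith), abs_of_nonneg (by linarith), abs_of_neg (by linarith)]
  linarith

theorem relaxation_matrix_det_ne_zero_general (N : ℕ)
    (h P : ℝ) (hh : 0 < h) (hhP : h * P < 2)
    (q p : Fin N → ℝ) (hq : ∀ i, 0 < q i) (hp : ∀ i, |p i| ≤ P)
    (L : Matrix (Fin N) (Fin N) ℝ)
    (hL : ∀ i j : Fin N,
      L i j =
        if i.val = 0 ∨ i.val = N - 1 then
          (if j = i then 1 else 0)
        else
          if j.val + 1 = i.val then 1 + h * p i / 2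
          else if j = i then -2 - h^2 * q i
          else if j.val = i.val + 1 then 1 - h * p i / 2
          else 0) :
    L.det ≠ 0 := by
  refine det_ne_zero_of_sum_row_lt_diag fun k => ?_
  by_cases hbd : k.val = 0 ∨ k.val = N - 1
  · have hrow : ∀ j, L k j = if j = k then 1 else 0 := fun j => by rw [hL, if_pos hbd]
    have hoff : ∀ j ∈ univ.erase k, ‖L k j‖ = 0 := fun j hj => by simp [hrow, ne_of_mem_erase hj]
    rw [sum_eq_zero hoff, hrow, if_pos rfl]
    norm_num
  · obtain ⟨hk0, hkN⟩ := not_or.mp hbd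
    have hk : 0 < k.val ∧ k.val + 1 < N := by omega
    have hrow : ∀ j, L k j = if j.val + 1 = k.val then 1 + h * p k / 2
        else if j = k then -2 - h ^ 2 * q k else if j.val = k.val + 1 then 1 - h * p k / 2
        else 0 := fun j => by rw [hL, if_neg hbd]
    have hoff : ∑ j ∈ univ.erase k, ‖L k j‖ = |1 + h * p k / 2| + |1 - h * p k / 2| := by
      rw [Fin.sum_erase_eq_add_of_support_adjacent (fun j => ‖L k j‖) hk.1 hk.2
        fun j h₁ h₂ h₃ => by simp [hrow, h₁, h₂, h₃]]
      simp [hrow, Fin.ext_iff, Nat.sub_add_cancel hk.1, show k.val + 1 + 1 ≠ k.val by omega]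
    have hx : |h * p k / 2| ≤ 1 := by
      rw [abs_div, abs_mul, abs_of_pos hh, abs_two]
      nlinarith [hp k]
    rw [hoff, hrow, if_neg (by omega), if_pos rfl, Real.norm_eq_abs]
    exact abs_one_add_add_abs_one_sub_lt_abs_neg_two_sub hx (mul_pos (pow_pos hh 2) (hq k))

/-- The tridiagonal matrix of the central-difference relaxation method is
nonsingular under the conditions `q > 0`, `|p| ≤ P`, `h > 0`, `h·P < 2`. -/
theorem relaxation_matrix_det_ne_zero (N : ℕ) (hN : 2 ≤ N)
    (h P : ℝ) (hh : 0 < h) (hP : 0 ≤ P) (hhP : h * P < 2)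
    (q p : Fin N → ℝ) (hq : ∀ i, 0 < q i) (hp : ∀ i, |p i| ≤ P)
    (L : Matrix (Fin N) (Fin N) ℝ)
    (hL : ∀ i j : Fin N,
      L i j =
        if i.val = 0 ∨ i.val = N - 1 then
          (if j = i then 1 else 0)
        else
          if j.val + 1 = i.val then 1 + h * p i / 2
          else if j = i then -2 - h^2 * q i
          else if j.val = i.val + 1 then 1 - h * p i / 2
          else 0) :
    L.det ≠ 0 :=
  relaxation_matrix_det_ne_zero_general N h P hh hhP q p hq hp L hL
end

section
/- Let a < b be reals and u_a, u_b, v ∈ ℝ. Let u, w : ℝ → ℝ be twice differentiable functions with u''(x) = w''(x) for all x ∈ [a,b], u(a) = u_a, u'(a) = v, w(a) = u_a, and w(b) = u_b. Then w'(a) = v − (u(b) − u_b)/(b − a). (This is the iteration formula of the shooting by Picard method: the initial slope of the Picard projection trajectory w of the shooting trajectory u corrects the initial condition v by (u(b) − u_b)/(b − a).) -/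
/-! The difference `u - w` has vanishing second derivative on `[a, b]`, so it is affine there:
`(u - w) b - (u - w) a = (b - a) * (u - w)' a`. With the boundary data this reads
`u b - ub = (b - a) * (v - w' a)`. -/

open Set

section

variable {E : Type*} [NormedAddCommGroup E] [NormedSpace ℝ E] {a b : ℝ}

theorem eq_left_of_deriv_eq_zero_on_Ico {f : ℝ → E} (hf : Differentiable ℝ f)
    (hf' : ∀ x ∈ Ico a b, deriv f x = 0) : ∀ x ∈ Icc a b, f x = f a :=
  constant_of_has_deriv_right_zero hf.continuous.continuousOn fun x hx =>
    hf' x hx ▸ (hf x).hasDerivAt.hasDerivWithinAt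

theorem sub_eq_smul_deriv_of_deriv_deriv_eq_zero {g : ℝ → E} (hg : Differentiable ℝ g)
    (hg' : Differentiable ℝ (deriv g)) (hab : a ≤ b)
    (hg'' : ∀ x ∈ Icc a b, deriv (deriv g) x = 0) :
    g b - g a = (b - a) • deriv g a := by
  have hderiv_const : ∀ x ∈ Icc a b, deriv g x = deriv g a :=
    eq_left_of_deriv_eq_zero_on_Ico hg' fun x hx => hg'' x (Ico_subset_Icc_self hx)
  set r : ℝ → E := fun x => g x - x • deriv g a
  have hr : ∀ x, HasDerivAt r (deriv g x - deriv g a) x := fun x => by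
    simpa using (hg x).hasDerivAt.fun_sub ((hasDerivAt_id' x).smul_const (deriv g a))
  have hr' : ∀ x ∈ Ico a b, deriv r x = 0 := fun x hx => by
    rw [(hr x).deriv, hderiv_const x (Ico_subset_Icc_self hx), sub_self]
  have := eq_left_of_deriv_eq_zero_on_Ico (fun x => (hr x).differentiableAt) hr' b
    (right_mem_Icc.2 hab)
  simp only [r] at this
  rw [sub_smul]
  linear_combination (norm := module) this

end

/-- Shooting by Picard method: the initial slope of the Picard projection
trajectory `w` of the shooting trajectory `u` is `v - (u(b) - u_b)/(b-a)`. -/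
theorem shooting_by_picard (a b : ℝ) (hab : a < b) (ua ub v : ℝ) (u w : ℝ → ℝ)
    (hu : Differentiable ℝ u) (hu' : Differentiable ℝ (deriv u))
    (hw : Differentiable ℝ w) (hw' : Differentiable ℝ (deriv w))
    (heq : ∀ x ∈ Set.Icc a b, deriv (deriv u) x = deriv (deriv w) x)
    (hua : u a = ua) (huv : deriv u a = v)
    (hwa : w a = ua) (hwb : w b = ub) :
    deriv w a = v - (u b - ub) / (b - a) := by
  have hderiv : deriv (u - w) = deriv u - deriv w := funext fun x => deriv_sub (hu x) (hw x)
  have hdd : ∀ x ∈ Icc a b, deriv (deriv (u - w)) x = 0 := fun x hx => by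
    rw [hderiv, deriv_sub (hu' x) (hw' x), heq x hx, sub_self]
  have key := sub_eq_smul_deriv_of_deriv_deriv_eq_zero (hu.sub hw) (hderiv ▸ hu'.sub hw')
    hab.le hdd
  simp only [hderiv, Pi.sub_apply, smul_eq_mul, hua, huv, hwa, hwb, sub_self, sub_zero] at key
  rw [key, mul_div_cancel_left₀ _ (sub_ne_zero.2 hab.ne')]
  ring
end

section
/- Let a < b be reals and u_a, u_b, v ∈ ℝ, and let q, p : ℝ → ℝ. Let u : ℝ → ℝ be twice differentiable with u(a) = u_a and u'(a) = v (the shooting trajectory). Let w : ℝ → ℝ be twice differentiable with w''(x) = u''(x) + q(x)·(w(x) − u(x)) + p(x)·(w'(x) − u'(x)) for all x ∈ [a,b], w(a) = u_a, and w(b) = u_b (the projection trajectory). Let z : ℝ → ℝ be twice differentiable with z''(x) = q(x)·z(x) + p(x)·z'(x) for all x ∈ [a,b], z(a) = 0, z'(a) = 1, and z(b) ≠ 0. Assume the initial value problem for the linear equation is uniquely solvable, i.e. any two twice differentiable functions w₁, w₂ satisfying w''(x) = q(x)w(x) + p(x)w'(x) on [a,b] with w₁(a) = w₂(a) and w₁'(a)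 = w₂'(a) agree on [a,b]. Then w'(a) = v − (u(b) − u_b)/z(b). (This is the shooting iteration formula (43)/(50): with q, p taken along u it gives the shooting by Newton method, with q, p taken along the initial guess it gives the shooting by constant-slope method.) -/
/-- Shooting iteration formula: the initial slope of the projection trajectory
`w` of the shooting trajectory `u` is `v - (u(b) - u_b)/z(b)`, where `z` solves
the associated variational equation with `z(a) = 0`, `z'(a) = 1`. -/
theorem shooting_iteration_formula (a b : ℝ) (hab : a < b)
    (ua ub v : ℝ) (q p : ℝ → ℝ) (u w z : ℝ → ℝ)
    (hu : Differentiable ℝ u) (hu' : Differentiable ℝ (deriv u))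
    (hw : Differentiable ℝ w) (hw' : Differentiable ℝ (deriv w))
    (hz : Differentiable ℝ z) (hz' : Differentiable ℝ (deriv z))
    (hua : u a = ua) (huv : deriv u a = v)
    (hweq : ∀ x ∈ Set.Icc a b,
      deriv (deriv w) x =
        deriv (deriv u) x + q x * (w x - u x) + p x * (deriv w x - deriv u x))
    (hwa : w a = ua) (hwb : w b = ub)
    (hzeq : ∀ x ∈ Set.Icc a b,
      deriv (deriv z) x = q x * z x + p x * deriv z x)
    (hza : z a = 0) (hza' : deriv z a = 1) (hzb : z b ≠ 0)
    (huniq : ∀ w₁ w₂ : ℝ → ℝ,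
      Differentiable ℝ w₁ → Differentiable ℝ (deriv w₁) →
      Differentiable ℝ w₂ → Differentiable ℝ (deriv w₂) →
      (∀ x ∈ Set.Icc a b,
        deriv (deriv w₁) x = q x * w₁ x + p x * deriv w₁ x) →
      (∀ x ∈ Set.Icc a b,
        deriv (deriv w₂) x = q x * w₂ x + p x * deriv w₂ x) →
      w₁ a = w₂ a → deriv w₁ a = deriv w₂ a →
      ∀ x ∈ Set.Icc a b, w₁ x = w₂ x) :
    deriv w a = v - (u b - ub) / z b := by
  set s : ℝ := deriv w a - v with hs
  set d : ℝ → ℝ := fun x => w x - u x with hd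
  set g : ℝ → ℝ := fun x => s * z x with hg
  have hdd : Differentiable ℝ d := hw.sub hu
  have hgd : Differentiable ℝ g := hz.const_mul s
  have hderivd : deriv d = fun x => deriv w x - deriv u x := by
    funext x
    exact deriv_sub (hw x) (hu x)
  have hderivg : deriv g = fun x => s * deriv z x := by
    funext x
    simp [hg, deriv_const_mul s (hz x)]
  have hdd' : Differentiable ℝ (deriv d) := by
    rw [hderivd]; exact hw'.sub hu'
  have hgd' : Differentiable ℝ (deriv g) := by
    rw [hderivg]; exact hz'.const_mul s
  have hdeq : ∀ x ∈ Set.Icc a b, deriv (deriv d) x = q x * d x + p x * deriv d x := by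
    intro x hx
    have h1 : deriv (deriv d) x = deriv (deriv w) x - deriv (deriv u) x := by
      rw [hderivd]
      exact deriv_sub (hw' x) (hu' x)
    rw [h1, hweq x hx, hderivd]
    simp [hd]
    ring
  have hgeq : ∀ x ∈ Set.Icc a b, deriv (deriv g) x = q x * g x + p x * deriv g x := by
    intro x hx
    have h1 : deriv (deriv g) x = s * deriv (deriv z) x := by
      rw [hderivg]
      exact deriv_const_mul s (hz' x)
    rw [h1, hzeq x hx, hderivg]
    simp [hg]
    ring
  have ha0 : d a = g a := by simp [hd, hg, hwa, hua, hza]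
  have ha1 : deriv d a = deriv g a := by
    rw [hderivd, hderivg]
    simp [hza', huv, hs]
  have hb : d b = g b :=
    huniq d g hdd hdd' hgd hgd' hdeq hgeq ha0 ha1 b ⟨le_of_lt hab, le_refl b⟩
  have hdb : ub - u b = s * z b := by simpa [hd, hg, hwb] using hb
  have hsval : s = (ub - u b) / z b := by
    field_simp at hdb ⊢
    linarith [hdb]
  have : deriv w a = v + (ub - u b) / z b := by
    have := hsval; rw [hs] at this; linarith
  rw [this]
  ring
end
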